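/- arXiv:1810.04210 — 2 statements merged into one kernel-verified Lean document; each statement's English description precedes it below -/
import Mathlib

section
/- There exists a nonzero φ ∈ L^p(X,𝓑,μ) with liminf_{n→∞} ‖T_f^n φ‖ = 0 if and only if there exists a measurable set B with 0 < μ(B) < ∞ and liminf_{n→∞} μ(f^{-n}(B)) = 0. -/
/-!
The hypothesis `c μ(B) ≤ μ(f B)` makes `f` non-singular, so `T_fⁿ φ = φ ∘ fⁿ` almost everywhere
and `‖T_fⁿ φ‖ₚ = ‖φ ∘ fⁿ‖ₚ`. If `φ ≠ 0`, some level set `B = {ε ≤ |φ|}` has positive measure, and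
Chebyshev's inequality gives `μ(f⁻ⁿ B) ≤ ε⁻ᵖ ‖T_fⁿ φ‖ₚᵖ`, so `μ(f⁻ⁿ B)` is small whenever
`‖T_fⁿ φ‖ₚ` is. Conversely, for `φ = 1_B` one has `‖T_fⁿ φ‖ₚ = μ(f⁻ⁿ B)^{1/p}`.
-/

open MeasureTheory Filter Set
open scoped ENNReal

/-- A continuous self-map `g` of a metric space is *Li-Yorke chaotic* if there is an
uncountable set `S` (a scrambled set) such that every pair of distinct points `x, y ∈ S`
satisfies `liminf dist (gⁿ x) (gⁿ y) = 0` and `limsup dist (gⁿ x) (gⁿ y) > 0`. -/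
def LiYorkeChaotic {M : Type*} [PseudoMetricSpace M] (g : M → M) : Prop :=
  ∃ S : Set M, ¬ S.Countable ∧ ∀ x ∈ S, ∀ y ∈ S, x ≠ y →
    (∀ ε > 0, ∃ᶠ n in atTop, dist (g^[n] x) (g^[n] y) < ε) ∧
    (∃ ε > 0, ∃ᶠ n in atTop, ε < dist (g^[n] x) (g^[n] y))

section Liminf

variable {ι : Type*} {l : Filter ι}

theorem ENNReal.liminf_rpow {u : ι → ℝ≥0∞} {q : ℝ} (hq : 0 < q) :
    l.liminf (fun i => u i ^ q) = l.liminf u ^ q :=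
  ((ENNReal.orderIsoRpow q hq).liminf_apply).symm

theorem liminf_enorm_eq_zero_iff {E : Type*} [SeminormedAddGroup E] {x : ι → E} :
    l.liminf (fun i => ‖x i‖ₑ) = 0 ↔ ∀ ε > (0 : ℝ), ∃ᶠ i in l, ‖x i‖ < ε := by
  rw [← nonpos_iff_eq_zero, liminf_le_iff]
  constructor
  · intro h ε hε
    exact (h _ (ENNReal.ofReal_pos.2 hε)).mono fun i hi => by
      rwa [← ofReal_norm, ENNReal.ofReal_lt_ofReal_iff hε] at hi
  · intro h δ hδ
    obtain ⟨ε, -, hε, hεδ⟩ := ENNReal.lt_iff_exists_real_btwn.1 hδ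
    exact (h ε (ENNReal.ofReal_pos.1 hε)).mono fun i hi =>
      lt_of_le_of_lt (by rw [← ofReal_norm]; exact ENNReal.ofReal_le_ofReal hi.le) hεδ

end Liminf

theorem MeasureTheory.Measure.QuasiMeasurePreserving.of_mul_le_measure_image
    {α β : Type*} [MeasurableSpace α] [MeasurableSpace β] {μa : Measure α} {μb : Measure β}
    {f : α → β} (hf : Measurable f) {c : ℝ≥0∞} (hc : c ≠ 0)
    (hcf : ∀ B : Set α, MeasurableSet B → c * μa B ≤ μb (f '' B)) :
    Measure.QuasiMeasurePreserving f μa μb := by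
  refine ⟨hf, Measure.AbsolutelyContinuous.mk fun N hN hN0 => ?_⟩
  rw [Measure.map_apply hf hN]
  have hmul : c * μa (f ⁻¹' N) = 0 := nonpos_iff_eq_zero.1 <|
    (hcf _ (hf hN)).trans_eq (measure_mono_null (image_preimage_subset f N) hN0)
  exact (mul_eq_zero.1 hmul).resolve_left hc

section Orbit

variable {X : Type*} [MeasurableSpace X] {μ : Measure X} {f : X → X}
  {𝕜 E : Type*} [NormedField 𝕜] [NormedAddCommGroup E] [NormedSpace 𝕜 E]
  {p : ℝ≥0∞} [Fact (1 ≤ p)] {T : Lp E p μ →L[𝕜] Lp E p μ}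

theorem coeFn_pow_apply_ae_eq_comp_iterate (hf : Measure.QuasiMeasurePreserving f μ μ)
    (hT : ∀ φ : Lp E p μ, ⇑(T φ) =ᵐ[μ] fun x => φ (f x)) (φ : Lp E p μ) (n : ℕ) :
    ⇑((T ^ n) φ) =ᵐ[μ] fun x => φ (f^[n] x) := by
  induction n with
  | zero => simp
  | succ n ih =>
    rw [pow_succ', mul_apply_eq_comp]
    exact (hT _).trans (hf.ae_eq_comp ih)

theorem enorm_pow_apply_eq_eLpNorm_comp_iterate (hf : Measure.QuasiMeasurePreserving f μ μ)
    (hT : ∀ φ : Lp E p μ, ⇑(T φ) =ᵐ[μ] fun x => φ (f x)) {φ : Lp E p μ} {g : X → E}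
    (hg : φ =ᵐ[μ] g) (n : ℕ) :
    ‖(T ^ n) φ‖ₑ = eLpNorm (g ∘ f^[n]) p μ := by
  rw [Lp.enorm_def]
  exact eLpNorm_congr_ae ((coeFn_pow_apply_ae_eq_comp_iterate hf hT φ n).trans
    ((hf.iterate n).ae_eq_comp hg))

end Orbit

section

variable {X E : Type*} [MeasurableSpace X] {μ : Measure X} [NormedAddCommGroup E]

theorem exists_measure_setOf_le_enorm_ne_zero {g : X → E} (hg : ¬ g =ᵐ[μ] 0) :
    ∃ ε ≠ 0, μ {x | ε ≤ ‖g x‖ₑ} ≠ 0 := by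
  by_contra! h
  refine hg (ae_iff.2 (measure_mono_null (fun x hx => ?_) (measure_iUnion_null fun n : ℕ =>
    h (n : ℝ≥0∞)⁻¹ (ENNReal.inv_ne_zero.2 (ENNReal.natCast_ne_top n)))))
  obtain ⟨n, hn⟩ := ENNReal.exists_inv_nat_lt (enorm_ne_zero.2 hx)
  exact mem_iUnion.2 ⟨n, hn.le⟩

theorem exists_measurableSet_liminf_measure_preimage_iterate_eq_zero {p : ℝ≥0∞} (hp0 : p ≠ 0)
    (hp : p ≠ ∞) {f : X → X} (hf : Measurable f) {g : X → E} (hg : StronglyMeasurable g)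
    (hg0 : ¬ g =ᵐ[μ] 0) (hgp : eLpNorm g p μ ≠ ∞)
    (hlim : atTop.liminf (fun n => eLpNorm (g ∘ f^[n]) p μ) = 0) :
    ∃ B : Set X, MeasurableSet B ∧ 0 < μ B ∧ μ B < ∞ ∧
      atTop.liminf (fun n : ℕ => μ (f^[n] ⁻¹' B)) = 0 := by
  obtain ⟨ε, hε, hB⟩ := exists_measure_setOf_le_enorm_ne_zero hg0
  have hpt : 0 < p.toReal := ENNReal.toReal_pos hp0 hp
  have hK : ε⁻¹ ^ p.toReal ≠ ∞ :=
    ENNReal.rpow_ne_top_of_nonneg hpt.le (ENNReal.inv_ne_top.2 hε)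
  have chebyshev (h : X → E) (hh : AEStronglyMeasurable h μ) :
      μ {x | ε ≤ ‖h x‖ₑ} ≤ ε⁻¹ ^ p.toReal * eLpNorm h p μ ^ p.toReal :=
    meas_ge_le_mul_pow_eLpNorm_enorm μ hp0 hp hh hε (fun _ => by simp)
  refine ⟨_, measurableSet_le measurable_const hg.enorm, pos_iff_ne_zero.2 hB, ?_, ?_⟩
  · exact (chebyshev g hg.aestronglyMeasurable).trans_lt
      (ENNReal.mul_lt_top hK.lt_top (ENNReal.rpow_lt_top_of_nonneg hpt.le hgp))
  · refine nonpos_iff_eq_zero.1 ?_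
    calc atTop.liminf (fun n => μ (f^[n] ⁻¹' {x | ε ≤ ‖g x‖ₑ}))
        ≤ atTop.liminf (fun n => ε⁻¹ ^ p.toReal * eLpNorm (g ∘ f^[n]) p μ ^ p.toReal) :=
          liminf_le_liminf (Eventually.of_forall fun n =>
            chebyshev _ (hg.comp_measurable (hf.iterate n)).aestronglyMeasurable)
      _ = 0 := by
          rw [ENNReal.liminf_const_mul_of_ne_top hK, ENNReal.liminf_rpow hpt, hlim,
            ENNReal.zero_rpow_of_pos hpt, mul_zero]

theorem eLpNorm_indicator_const_comp {Y : Type*} [MeasurableSpace Y] {p : ℝ≥0∞} (hp0 : p ≠ 0)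
    (hp : p ≠ ∞) {g : X → Y} (hg : Measurable g) {B : Set Y} (hB : MeasurableSet B) (c : E) :
    eLpNorm ((B.indicator fun _ => c) ∘ g) p μ = ‖c‖ₑ * μ (g ⁻¹' B) ^ (1 / p.toReal) := by
  have hcomp : (B.indicator fun _ => c) ∘ g = (g ⁻¹' B).indicator fun _ => c := by
    ext x
    exact (indicator_comp_right g).symm
  rw [hcomp, eLpNorm_indicator_const (hg hB) hp0 hp]

end

theorem exists_semiNullOrbit_iff_exists_set_general
    {X : Type*} [MeasurableSpace X] (μ : Measure X)
    (p : ℝ≥0∞) [Fact (1 ≤ p)] (hp : p ≠ ∞)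
    (f : X → X) (hf : Measurable f)
    (c : ℝ≥0∞) (hc : 0 < c)
    (hcf : ∀ B : Set X, MeasurableSet B → c * μ B ≤ μ (f '' B))
    (T : Lp ℝ p μ →L[ℝ] Lp ℝ p μ)
    (hT : ∀ φ : Lp ℝ p μ, ⇑(T φ) =ᵐ[μ] fun x => φ (f x)) :
    (∃ φ : Lp ℝ p μ, φ ≠ 0 ∧ ∀ ε > (0 : ℝ), ∃ᶠ n in atTop, ‖(T ^ n) φ‖ < ε) ↔
    (∃ B : Set X, MeasurableSet B ∧ 0 < μ B ∧ μ B < ∞ ∧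
      atTop.liminf (fun n : ℕ => μ (f^[n] ⁻¹' B)) = 0) := by
  have hqmp := Measure.QuasiMeasurePreserving.of_mul_le_measure_image hf hc.ne' hcf
  have hp0 : p ≠ 0 := (zero_lt_one.trans_le Fact.out).ne'
  simp_rw [← liminf_enorm_eq_zero_iff]
  constructor
  · rintro ⟨φ, hφ0, hφ⟩
    have hφg := (Lp.aestronglyMeasurable φ).ae_eq_mk
    refine exists_measurableSet_liminf_measure_preimage_iterate_eq_zero hp0 hp hf
      (Lp.aestronglyMeasurable φ).stronglyMeasurable_mk
      (fun h => hφ0 (Lp.eq_zero_iff_ae_eq_zero.2 (hφg.trans h)))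
      ((eLpNorm_congr_ae hφg).symm.trans_ne (Lp.eLpNorm_ne_top φ)) ?_
    simpa only [enorm_pow_apply_eq_eLpNorm_comp_iterate hqmp hT hφg] using hφ
  · rintro ⟨B, hB, hB0, hBtop, hlim⟩
    refine ⟨indicatorConstLp p hB hBtop.ne (1 : ℝ), ?_, ?_⟩
    · rw [← norm_ne_zero_iff, norm_indicatorConstLp hp0 hp, norm_one, one_mul]
      exact (Real.rpow_pos_of_pos (ENNReal.toReal_pos hB0.ne' hBtop.ne) _).ne'
    · have hpt : 0 < 1 / p.toReal := one_div_pos.2 (ENNReal.toReal_pos hp0 hp)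
      simp_rw [enorm_pow_apply_eq_eLpNorm_comp_iterate hqmp hT indicatorConstLp_coeFn,
        eLpNorm_indicator_const_comp hp0 hp (hf.iterate _) hB, enorm_one, one_mul,
        ENNReal.liminf_rpow hpt, hlim, ENNReal.zero_rpow_of_pos hpt]

/-- **(LY2) ⇔ (LY3).** There exists a nonzero `φ ∈ L^p(X, 𝓑, μ)` with
`liminf ‖T_f^n φ‖ = 0` if and only if there exists a measurable set `B` with
`0 < μ(B) < ∞` and `liminf μ(f^{-n}(B)) = 0`. -/
theorem exists_semiNullOrbit_iff_exists_set
    {X : Type*} [MeasurableSpace X] (μ : Measure X) (hX : μ Set.univ ≠ 0)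
    (p : ℝ≥0∞) [Fact (1 ≤ p)] (hp : p ≠ ∞)
    (f : X → X) (hf : Measurable f)
    (hfim : ∀ B : Set X, MeasurableSet B → MeasurableSet (f '' B))
    (c : ℝ≥0∞) (hc : 0 < c)
    (hcf : ∀ B : Set X, MeasurableSet B → c * μ B ≤ μ (f '' B))
    (T : Lp ℝ p μ →L[ℝ] Lp ℝ p μ)
    (hT : ∀ φ : Lp ℝ p μ, ⇑(T φ) =ᵐ[μ] fun x => φ (f x)) :
    (∃ φ : Lp ℝ p μ, φ ≠ 0 ∧ ∀ ε > (0 : ℝ), ∃ᶠ n in atTop, ‖(T ^ n) φ‖ < ε) ↔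
    (∃ B : Set X, MeasurableSet B ∧ 0 < μ B ∧ μ B < ∞ ∧
      atTop.liminf (fun n : ℕ => μ (f^[n] ⁻¹' B)) = 0) :=
  exists_semiNullOrbit_iff_exists_set_general μ p hp f hf c hc hcf T hT
end

section
/- Let X = {i ∈ ℕ : i ≥ 1}, 𝓑 = 𝒫(X), let μ be the finite measure determined by μ({i}) = 2^{-i}, and let f : X → X be the (non-injective, surjective) map f(i) = i−1 for i ≥ 2 and f(1) = 1. Then (1/2)·μ(B) ≤ μ(f(B)) ≤ 2·μ(B) for every B ⊆ X (so T_f is a well-defined continuous linear operator on L^p(X,𝒫(X),μ)), and T_f admits no semi-irregular vector: for every φ ∈ L^p(X,𝒫(X),μ), if φ(1) ≠ 0 then ‖T_f^n φ‖^p ≥ (1/2)·|φ(1)|^p for all n ≥ 1, while if φ(1) = 0 then ‖T_f^n φ‖ → 0. In particular T_f is not Li-Yorke chaotic, even though the set B = {2} satisfies μ(B) > 0 and lim_{n→∞} μ(f^{-n}(B)) = 0. -/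
/-!
For `y ≥ 2` the fibre `f⁻ⁿ{y}` is the single point `y + n`, of measure `2⁻ⁿ μ{y}`, while all
other points are eventually sent to the fixed point `1`. Hence
`‖Tⁿφ‖ᵖ = |φ(1)|ᵖ μ(f⁻ⁿ{1}) + 2⁻ⁿ ∑_{y ≥ 2} |φ(y)|ᵖ μ{y}`: the first term is at least
`|φ(1)|ᵖ / 2`, the second tends to `0`. So every orbit norm either stays away from `0` or tends
to `0`, and no vector is semi-irregular. A Li-Yorke pair `x, y` of a linear operator would make
`x - y` semi-irregular, so `T` is not Li-Yorke chaotic.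
-/

open MeasureTheory Filter Set Topology
open scoped ENNReal

noncomputable section

section SemiIrregular

variable {𝕜 Y : Type*} [NormedField 𝕜] [NormedAddCommGroup Y] [NormedSpace 𝕜 Y]

def IsSemiIrregular (T : Y →L[𝕜] Y) (y : Y) : Prop :=
  (∀ ε > (0 : ℝ), ∃ᶠ n in atTop, ‖(T ^ n) y‖ < ε) ∧ (∃ ε > (0 : ℝ), ∃ᶠ n in atTop, ε < ‖(T ^ n) y‖)

lemma not_isSemiIrregular_of_tendsto {T : Y →L[𝕜] Y} {y : Y}
    (h : Tendsto (fun n => ‖(T ^ n) y‖) atTop (𝓝 0)) : ¬ IsSemiIrregular T y := by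
  rintro ⟨-, ε, hε, hbig⟩
  obtain ⟨n, hlt, hgt⟩ := (hbig.and_eventually (h.eventually_lt_const hε)).exists
  exact hlt.not_gt hgt

lemma not_isSemiIrregular_of_le_rpow {T : Y →L[𝕜] Y} {y : Y} {c q : ℝ} (hc : 0 < c) (hq : 0 < q)
    (h : ∀ᶠ n in atTop, c ≤ ‖(T ^ n) y‖ ^ q) : ¬ IsSemiIrregular T y := by
  rintro ⟨hsmall, -⟩
  obtain ⟨n, hlt, hge⟩ :=
    ((hsmall (c ^ q⁻¹) (Real.rpow_pos_of_pos hc _)).and_eventually h).exists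
  rw [Real.lt_rpow_inv_iff_of_pos (norm_nonneg _) hc.le hq] at hlt
  exact hlt.not_ge hge

lemma LiYorkeChaotic.exists_isSemiIrregular {T : Y →L[𝕜] Y} (h : LiYorkeChaotic ⇑T) :
    ∃ y, IsSemiIrregular T y := by
  obtain ⟨S, hS, hscrambled⟩ := h
  obtain ⟨x, hx, y, hy, hxy⟩ : S.Nontrivial := by
    by_contra hS'
    exact hS (not_nontrivial_iff.mp hS').countable
  refine ⟨x - y, ?_⟩
  simpa only [IsSemiIrregular, map_sub, ← dist_eq_norm, FunLike.coe_pow_eq_iterate]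
    using hscrambled x hx y hy hxy

end SemiIrregular

lemma tendsto_zero_of_tendsto_rpow {u : ℕ → ℝ} {q : ℝ} (hq : 0 < q) (hu : ∀ n, 0 ≤ u n)
    (h : Tendsto (fun n => u n ^ q) atTop (𝓝 0)) : Tendsto u atTop (𝓝 0) := by
  have hroot := ((Real.continuousAt_rpow_const 0 q⁻¹ (Or.inr (inv_pos.2 hq).le)).tendsto).comp h
  simp only [Function.comp_def, Real.zero_rpow (inv_ne_zero hq.ne')] at hroot
  convert hroot using 2 with n
  rw [← Real.rpow_mul (hu n), mul_inv_cancel₀ hq.ne', Real.rpow_one]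

section LpNorm

variable {α E : Type*} [MeasurableSpace α] {μ : Measure α} [NormedAddCommGroup E] {p : ℝ≥0∞}

lemma Lp.lintegral_enorm_rpow_ne_top (hp₀ : p ≠ 0) (hp : p ≠ ∞) (ψ : Lp E p μ) :
    ∫⁻ x, ‖ψ x‖ₑ ^ p.toReal ∂μ ≠ ∞ :=
  ((eLpNorm_lt_top_iff_lintegral_rpow_enorm_lt_top hp₀ hp).mp (Lp.eLpNorm_lt_top ψ)).ne

lemma Lp.norm_rpow_eq_lintegral (hp₀ : p ≠ 0) (hp : p ≠ ∞) (ψ : Lp E p μ) :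
    ‖ψ‖ ^ p.toReal = (∫⁻ x, ‖ψ x‖ₑ ^ p.toReal ∂μ).toReal := by
  rw [Lp.norm_def, eLpNorm_eq_lintegral_rpow_enorm_toReal hp₀ hp, ENNReal.toReal_rpow,
    ← ENNReal.rpow_mul, one_div_mul_cancel (ENNReal.toReal_pos hp₀ hp).ne', ENNReal.rpow_one]

lemma Lp.norm_apply_rpow_mul_le_norm_rpow [MeasurableSingletonClass α] (hp₀ : p ≠ 0)
    (hp : p ≠ ∞) (ψ : Lp E p μ) (x : α) :
    ‖ψ x‖ ^ p.toReal * μ.real {x} ≤ ‖ψ‖ ^ p.toReal := by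
  have hsingleton : ‖ψ x‖ₑ ^ p.toReal * μ {x} ≤ ∫⁻ y, ‖ψ y‖ₑ ^ p.toReal ∂μ := by
    simpa only [lintegral_singleton] using
      setLIntegral_le_lintegral {x} fun y => ‖ψ y‖ₑ ^ p.toReal
  rw [Lp.norm_rpow_eq_lintegral hp₀ hp]
  calc ‖ψ x‖ ^ p.toReal * μ.real {x} = (‖ψ x‖ₑ ^ p.toReal * μ {x}).toReal := by
        rw [ENNReal.toReal_mul, ← ENNReal.toReal_rpow, toReal_enorm, measureReal_def]
    _ ≤ _ := ENNReal.toReal_mono (Lp.lintegral_enorm_rpow_ne_top hp₀ hp ψ) hsingleton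

end LpNorm

section Countable

variable {α β : Type*} [MeasurableSpace α] [MeasurableSpace β]

lemma Lp.coeFn_pow_apply_of_ae_eq_comp {𝕜 E : Type*} [Countable α] {μ : Measure α}
    [NormedField 𝕜] [NormedAddCommGroup E] [NormedSpace 𝕜 E] {p : ℝ≥0∞} [Fact (1 ≤ p)]
    (hμ : ∀ x, μ {x} ≠ 0) {f : α → α} {T : Lp E p μ →L[𝕜] Lp E p μ}
    (hT : ∀ φ : Lp E p μ, ⇑(T φ) =ᵐ[μ] fun x => φ (f x)) (n : ℕ) (φ : Lp E p μ) :
    ⇑((T ^ n) φ) = fun x => φ (f^[n] x) := by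
  induction n with
  | zero => rfl
  | succ n ih =>
    funext x
    rw [pow_succ', Function.iterate_succ_apply]
    exact (ae_iff_of_countable.mp (hT _) x (hμ x)).trans (congrFun ih (f x))

lemma tsum_measure_singleton [Countable α] [MeasurableSingletonClass α] (μ : Measure α)
    (s : Set α) : ∑' x : s, μ {(x : α)} = μ s :=
  tsum_measure_preimage_singleton s.to_countable (f := id) fun _ _ => .of_discrete

variable [Countable α] [MeasurableSingletonClass α] {μ : Measure α}

lemma lintegral_comp_eq_tsum_measure_preimage [Countable β] [MeasurableSingletonClass β]
    (F : α → β) (g : β → ℝ≥0∞) :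
    ∫⁻ x, g (F x) ∂μ = ∑' y, g y * μ (F ⁻¹' {y}) := by
  rw [← lintegral_map .of_discrete .of_discrete, lintegral_countable']
  simp only [Measure.map_apply .of_discrete (measurableSet_singleton _)]

lemma measure_image_le_of_measure_singleton_le {ν : Measure β} {f : α → β} {c : ℝ≥0∞}
    (h : ∀ x, ν {f x} ≤ c * μ {x}) (B : Set α) : ν (f '' B) ≤ c * μ B :=
  calc ν (f '' B) = ν (⋃ x ∈ B, {f x}) := by rw [Set.image_eq_iUnion]
    _ ≤ ∑' x : B, ν {f x} := measure_biUnion_le ν B.to_countable _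
    _ ≤ ∑' x : B, c * μ {(x : α)} := ENNReal.tsum_le_tsum fun x => h x
    _ = c * μ B := by rw [ENNReal.tsum_mul_left, tsum_measure_singleton]

lemma measure_preimage_le_of_measure_preimage_singleton_le [Countable β]
    [MeasurableSingletonClass β] {ν : Measure β} {f : α → β} {c : ℝ≥0∞}
    (h : ∀ y, μ (f ⁻¹' {y}) ≤ c * ν {y}) (S : Set β) : μ (f ⁻¹' S) ≤ c * ν S :=
  calc μ (f ⁻¹' S) = ∑' y : S, μ (f ⁻¹' {(y : β)}) :=
        (tsum_measure_preimage_singleton S.to_countable fun _ _ => .of_discrete).symm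
    _ ≤ ∑' y : S, c * ν {(y : β)} := ENNReal.tsum_le_tsum fun y => h y
    _ = c * ν S := by rw [ENNReal.tsum_mul_left, tsum_measure_singleton]

end Countable

local notation "ℕ₁" => {i : ℕ // 1 ≤ i}

namespace DecrementExample

def HasDyadicWeights (μ : Measure ℕ₁) : Prop :=
  ∀ x : ℕ₁, μ {x} = (2 : ℝ≥0∞) ^ (-(x : ℕ) : ℤ)

def IsDecrementMap (f : ℕ₁ → ℕ₁) : Prop :=
  ∀ x : ℕ₁, (f x : ℕ) = if 2 ≤ (x : ℕ) then (x : ℕ) - 1 else 1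

def shift (n : ℕ) (y : ℕ₁) : ℕ₁ := ⟨y + n, le_add_right y.2⟩

variable {μ : Measure ℕ₁} {f : ℕ₁ → ℕ₁}

lemma coe_iterate (hf : IsDecrementMap f)
    (n : ℕ) (x : ℕ₁) : (f^[n] x : ℕ) = max ((x : ℕ) - n) 1 := by
  induction n generalizing x with
  | zero => simpa using x.2
  | succ n ih =>
    rw [Function.iterate_succ_apply, ih, hf]
    have := x.2
    split_ifs <;> omega

lemma iterate_one (hf : IsDecrementMap f)
    (n : ℕ) : f^[n] ⟨1, le_rfl⟩ = ⟨1, le_rfl⟩ :=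
  Subtype.ext <| (coe_iterate hf n _).trans (max_eq_right (Nat.sub_le 1 n))

lemma preimage_iterate_singleton
    (hf : IsDecrementMap f)
    (n : ℕ) {y : ℕ₁} (hy : 2 ≤ (y : ℕ)) : f^[n] ⁻¹' {y} = {shift n y} := by
  ext x
  simp only [mem_preimage, mem_singleton_iff, Subtype.ext_iff, coe_iterate hf, shift]
  omega

lemma preimage_singleton_subset
    (hf : IsDecrementMap f) (y : ℕ₁) :
    f ⁻¹' {y} ⊆ {y, shift 1 y} := by
  intro x hx
  simp only [mem_preimage, mem_singleton_iff, Subtype.ext_iff, hf x] at hx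
  simp only [mem_insert_iff, mem_singleton_iff, Subtype.ext_iff, shift]
  split_ifs at hx <;> omega

lemma measure_singleton_eq (hμ : HasDyadicWeights μ) (x : ℕ₁) :
    μ {x} = 2⁻¹ ^ (x : ℕ) := by
  rw [hμ, ENNReal.zpow_neg, zpow_natCast, ENNReal.inv_pow]

lemma measure_singleton_ne_zero (hμ : HasDyadicWeights μ) (x : ℕ₁) :
    μ {x} ≠ 0 := by
  simp [measure_singleton_eq hμ]

lemma measure_singleton_shift (hμ : HasDyadicWeights μ)
    (n : ℕ) (y : ℕ₁) : μ {shift n y} = 2⁻¹ ^ n * μ {y} := by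
  rw [measure_singleton_eq hμ, measure_singleton_eq hμ, ← pow_add, add_comm]
  rfl

lemma measure_singleton_apply_le (hμ : HasDyadicWeights μ)
    (hf : IsDecrementMap f) (x : ℕ₁) :
    μ {f x} ≤ 2 * μ {x} := by
  obtain ⟨k, hk⟩ : ∃ k, (x : ℕ) = k + 1 := ⟨x - 1, by have := x.2; omega⟩
  calc μ {f x} = 2⁻¹ ^ (f x : ℕ) := measure_singleton_eq hμ _
    _ ≤ 2⁻¹ ^ k := pow_le_pow_right_of_le_one' (ENNReal.inv_le_one.2 one_le_two)
        (by rw [hf]; split_ifs <;> omega)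
    _ = 2 * μ {x} := by
        rw [measure_singleton_eq hμ, hk, pow_succ', ← mul_assoc,
          ENNReal.mul_inv_cancel two_ne_zero ENNReal.ofNat_ne_top, one_mul]

lemma measure_preimage_singleton_le (hμ : HasDyadicWeights μ)
    (hf : IsDecrementMap f) (y : ℕ₁) :
    μ (f ⁻¹' {y}) ≤ 2 * μ {y} :=
  calc μ (f ⁻¹' {y}) ≤ μ {y} + μ {shift 1 y} :=
        (measure_mono (preimage_singleton_subset hf y)).trans (measure_union_le _ _)
    _ ≤ μ {y} + μ {y} := by
        rw [measure_singleton_shift hμ, pow_one]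
        gcongr
        exact mul_le_of_le_one_left zero_le (ENNReal.inv_le_one.2 one_le_two)
    _ = 2 * μ {y} := (two_mul _).symm

lemma lintegral_comp_iterate_le (hμ : HasDyadicWeights μ)
    (hf : IsDecrementMap f) {g : ℕ₁ → ℝ≥0∞}
    (hg : g ⟨1, le_rfl⟩ = 0) (n : ℕ) :
    ∫⁻ x, g (f^[n] x) ∂μ ≤ 2⁻¹ ^ n * ∫⁻ x, g x ∂μ := by
  rw [lintegral_comp_eq_tsum_measure_preimage, lintegral_countable', ← ENNReal.tsum_mul_left]
  refine ENNReal.tsum_le_tsum fun y => ?_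
  rcases eq_or_ne y ⟨1, le_rfl⟩ with rfl | hy
  · rw [hg, zero_mul, zero_mul, mul_zero]
  · have hy2 : 2 ≤ (y : ℕ) := by
      have := y.2
      have : (y : ℕ) ≠ 1 := fun h => hy (Subtype.ext h)
      omega
    rw [preimage_iterate_singleton hf n hy2, measure_singleton_shift hμ, mul_left_comm]

variable {𝕜 E : Type*} [NormedField 𝕜] [NormedAddCommGroup E] [NormedSpace 𝕜 E]
  {p : ℝ≥0∞} [Fact (1 ≤ p)] {T : Lp E p μ →L[𝕜] Lp E p μ}

lemma half_mul_norm_rpow_le (hμ : HasDyadicWeights μ)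
    (hf : IsDecrementMap f) (hp : p ≠ ∞)
    (hT : ∀ φ : Lp E p μ, ⇑(T φ) =ᵐ[μ] fun x => φ (f x)) (φ : Lp E p μ) (n : ℕ) :
    1 / 2 * ‖φ ⟨1, le_rfl⟩‖ ^ p.toReal ≤ ‖(T ^ n) φ‖ ^ p.toReal := by
  have hp₀ : p ≠ 0 := (zero_lt_one.trans_le Fact.out).ne'
  calc 1 / 2 * ‖φ ⟨1, le_rfl⟩‖ ^ p.toReal
        = ‖(T ^ n) φ ⟨1, le_rfl⟩‖ ^ p.toReal * μ.real {⟨1, le_rfl⟩} := by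
        rw [Lp.coeFn_pow_apply_of_ae_eq_comp (measure_singleton_ne_zero hμ) hT]
        beta_reduce
        rw [iterate_one hf, measureReal_def, measure_singleton_eq hμ]
        norm_num
        ring
    _ ≤ ‖(T ^ n) φ‖ ^ p.toReal := Lp.norm_apply_rpow_mul_le_norm_rpow hp₀ hp _ _

lemma tendsto_norm_pow_apply_of_apply_one_eq_zero
    (hμ : HasDyadicWeights μ)
    (hf : IsDecrementMap f) (hp : p ≠ ∞)
    (hT : ∀ φ : Lp E p μ, ⇑(T φ) =ᵐ[μ] fun x => φ (f x)) {φ : Lp E p μ}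
    (hφ : φ ⟨1, le_rfl⟩ = 0) : Tendsto (fun n => ‖(T ^ n) φ‖) atTop (𝓝 0) := by
  have hp₀ : p ≠ 0 := (zero_lt_one.trans_le Fact.out).ne'
  have hp_pos : 0 < p.toReal := ENNReal.toReal_pos hp₀ hp
  set I := ∫⁻ x, ‖φ x‖ₑ ^ p.toReal ∂μ
  have hbound (n : ℕ) : ‖(T ^ n) φ‖ ^ p.toReal ≤ (1 / 2) ^ n * I.toReal := by
    have hle := lintegral_comp_iterate_le hμ hf (g := fun y => ‖φ y‖ₑ ^ p.toReal)
      (by simp only [hφ, enorm_zero, ENNReal.zero_rpow_of_pos hp_pos]) n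
    rw [Lp.norm_rpow_eq_lintegral hp₀ hp,
      Lp.coeFn_pow_apply_of_ae_eq_comp (measure_singleton_ne_zero hμ) hT]
    calc _ ≤ (2⁻¹ ^ n * I).toReal :=
          ENNReal.toReal_mono (ENNReal.mul_ne_top (by simp)
            (Lp.lintegral_enorm_rpow_ne_top hp₀ hp φ)) hle
      _ = (1 / 2) ^ n * I.toReal := by simp
  refine tendsto_zero_of_tendsto_rpow hp_pos (fun n => norm_nonneg _)
    (squeeze_zero (fun n => by positivity) hbound ?_)
  simpa using (tendsto_pow_atTop_nhds_zero_of_lt_one (by norm_num)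
    (by norm_num : (1 / 2 : ℝ) < 1)).mul_const I.toReal

end DecrementExample

open DecrementExample in
/-- **Example (the injectivity of `f` is essential).** Let `X = {i ∈ ℕ : i ≥ 1}`, let `μ`
be the finite measure with `μ({i}) = 2^{-i}`, and let `f(i) = i - 1` for `i ≥ 2`,
`f(1) = 1`. Then `(1/2)·μ(B) ≤ μ(f(B)) ≤ 2·μ(B)` for every `B`, `T_f` admits no
semi-irregular vector (if `φ(1) ≠ 0` then `‖T_f^n φ‖^p ≥ (1/2)·|φ(1)|^p` for all `n ≥ 1`,
and if `φ(1) = 0` then `‖T_f^n φ‖ → 0`), and in particular `T_f` is not Li-Yorke chaotic,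
even though `B = {2}` satisfies `μ(B) > 0` and `μ(f^{-n}(B)) → 0`. -/
theorem noninjective_example_not_liYorke
    (μ : Measure {i : ℕ // 1 ≤ i})
    (hμ : ∀ x : {i : ℕ // 1 ≤ i}, μ {x} = (2 : ℝ≥0∞) ^ (-(x : ℕ) : ℤ))
    (f : {i : ℕ // 1 ≤ i} → {i : ℕ // 1 ≤ i})
    (hf : ∀ x : {i : ℕ // 1 ≤ i}, (f x : ℕ) = if 2 ≤ (x : ℕ) then (x : ℕ) - 1 else 1)
    (p : ℝ≥0∞) [Fact (1 ≤ p)] (hp : p ≠ ∞)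
    (T : Lp ℝ p μ →L[ℝ] Lp ℝ p μ)
    (hT : ∀ φ : Lp ℝ p μ, ⇑(T φ) =ᵐ[μ] fun x => φ (f x)) :
    (∀ B : Set {i : ℕ // 1 ≤ i}, μ B / 2 ≤ μ (f '' B) ∧ μ (f '' B) ≤ 2 * μ B) ∧
    (∀ φ : Lp ℝ p μ,
      (φ (⟨1, le_refl 1⟩ : {i : ℕ // 1 ≤ i}) ≠ 0 →
        ∀ n : ℕ, 1 ≤ n →
          (1 / 2) * |φ (⟨1, le_refl 1⟩ : {i : ℕ // 1 ≤ i})| ^ p.toReal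
            ≤ ‖(T ^ n) φ‖ ^ p.toReal) ∧
      (φ (⟨1, le_refl 1⟩ : {i : ℕ // 1 ≤ i}) = 0 →
        Tendsto (fun n : ℕ => ‖(T ^ n) φ‖) atTop (𝓝 0))) ∧
    (¬ ∃ φ : Lp ℝ p μ,
      (∀ ε > (0 : ℝ), ∃ᶠ n in atTop, ‖(T ^ n) φ‖ < ε) ∧
      (∃ ε > (0 : ℝ), ∃ᶠ n in atTop, ε < ‖(T ^ n) φ‖)) ∧
    ¬ LiYorkeChaotic (⇑T) ∧
    (0 < μ {(⟨2, one_le_two⟩ : {i : ℕ // 1 ≤ i})} ∧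
      Tendsto (fun n : ℕ => μ (f^[n] ⁻¹' {(⟨2, one_le_two⟩ : {i : ℕ // 1 ≤ i})}))
        atTop (𝓝 0)) := by
  have hp_pos : 0 < p.toReal := ENNReal.toReal_pos (zero_lt_one.trans_le Fact.out).ne' hp
  have hlower (φ : Lp ℝ p μ) (n : ℕ) :=
    Real.norm_eq_abs (φ ⟨1, le_rfl⟩) ▸ half_mul_norm_rpow_le hμ hf hp hT φ n
  have hnot_semi : ¬ ∃ φ, IsSemiIrregular T φ := by
    rintro ⟨φ, hφ⟩
    by_cases hφ₁ : φ ⟨1, le_rfl⟩ = 0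
    · exact not_isSemiIrregular_of_tendsto
        (tendsto_norm_pow_apply_of_apply_one_eq_zero hμ hf hp hT hφ₁) hφ
    · exact not_isSemiIrregular_of_le_rpow (by positivity) hp_pos
        (.of_forall (hlower φ)) hφ
  refine ⟨fun B => ⟨ENNReal.div_le_of_le_mul ?_,
      measure_image_le_of_measure_singleton_le (measure_singleton_apply_le hμ hf) B⟩,
    fun φ => ⟨fun _ n _ => hlower φ n,
      tendsto_norm_pow_apply_of_apply_one_eq_zero hμ hf hp hT⟩,
    hnot_semi, fun h => hnot_semi h.exists_isSemiIrregular,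
    pos_iff_ne_zero.2 (measure_singleton_ne_zero hμ _), ?_⟩
  · calc μ B ≤ μ (f ⁻¹' (f '' B)) := measure_mono (subset_preimage_image f B)
      _ ≤ 2 * μ (f '' B) :=
        measure_preimage_le_of_measure_preimage_singleton_le (measure_preimage_singleton_le hμ hf) _
      _ = μ (f '' B) * 2 := mul_comm _ _
  · have hμ₂ : μ {⟨2, one_le_two⟩} ≠ ∞ := by
      rw [measure_singleton_eq hμ]
      exact ENNReal.pow_ne_top (ENNReal.inv_ne_top.2 two_ne_zero)
    simp only [preimage_iterate_singleton hf _ (y := ⟨2, one_le_two⟩) le_rfl,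
      measure_singleton_shift hμ]
    simpa only [zero_mul] using ENNReal.Tendsto.mul_const
      (ENNReal.tendsto_pow_atTop_nhds_zero_of_lt_one (by norm_num)) (.inr hμ₂)
end
end
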